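/- arXiv:1403.5930 — 5 statements merged into one kernel-verified Lean document; each statement's English description precedes it below -/
import Mathlib

section
/- Let k be a field, E a k-vector space, λ, μ ∈ k, and f ∈ k[x,y] a polynomial in two commuting variables with f(λ,μ) ≠ 0. Let W₁ be an m×m upper triangular matrix over k all of whose diagonal entries equal λ, and let W₂ be an n×n upper triangular matrix over k all of whose diagonal entries equal μ (for instance, Weyr matrices of eigenvalues λ and μ respectively). Let v = (v_{ij}) be an m×n matrix with entries in E such that the family of all entries v_{ij} (1 ≤ i ≤ m, 1 ≤ j ≤ n) is k-linearly independent. Writing f = Σ_{s,t} α_{st} x^s y^t, define the m×n matrix u = f(W₁,W₂)·v with entries u_{pq} = Σ_{s,t} α_{st} Σ_{p',q'} (W₁^s)_{p,p'} (W₂^t)_{q',q} • v_{p',q'}. Then the family of all entries u_{pq} (1 ≤ p ≤ m, 1 ≤ q ≤ n) is k-linearly independent. (Lemma 3.2.6 (i)) -/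
open MvPolynomial

lemma pow_tri {k : Type*} [Field k] {m : ℕ} (W : Matrix (Fin m) (Fin m) k) (lam : k)
    (htri : ∀ i j : Fin m, j < i → W i j = 0) (hdiag : ∀ i, W i i = lam) (s : ℕ) :
    (∀ i j : Fin m, j < i → (W ^ s) i j = 0) ∧ (∀ i, (W ^ s) i i = lam ^ s) := by
  induction s with
  | zero => simp [Matrix.one_apply]; intro i j h; exact fun he => absurd he h.ne'
  | succ s ih =>
    obtain ⟨ih1, ih2⟩ := ih
    constructor
    · intro i j hji
      rw [pow_succ, Matrix.mul_apply]
      apply Finset.sum_eq_zero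
      intro x _
      rcases lt_or_ge x i with h | h
      · rw [ih1 i x h, zero_mul]
      · rw [htri x j (lt_of_lt_of_le hji h), mul_zero]
    · intro i
      rw [pow_succ, Matrix.mul_apply]
      rw [Finset.sum_eq_single i]
      · rw [ih2, hdiag, pow_succ]
      · intro x _ hx
        rcases lt_or_ge x i with h | h
        · rw [ih1 i x h, zero_mul]
        · rw [htri x i (lt_of_le_of_ne h (Ne.symm hx)), mul_zero]
      · intro h; exact absurd (Finset.mem_univ i) h

/-- **Lemma 3.2.6 (i).** If `f(λ,μ) ≠ 0`, `W₁`, `W₂` are upper triangular matrices with constant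
diagonals `λ` and `μ` respectively, and the entries of `v` are `k`-linearly independent, then the
entries of `u = f(W₁,W₂)·v` are `k`-linearly independent. -/
theorem entries_linearIndependent_of_eval_ne_zero
    (k : Type*) [Field k] (E : Type*) [AddCommGroup E] [Module k E]
    (lam mu : k) (f : MvPolynomial (Fin 2) k)
    (hf : eval ![lam, mu] f ≠ 0)
    (m n : ℕ)
    (W₁ : Matrix (Fin m) (Fin m) k) (W₂ : Matrix (Fin n) (Fin n) k)
    (hW₁tri : ∀ i j : Fin m, j < i → W₁ i j = 0) (hW₁diag : ∀ i, W₁ i i = lam)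
    (hW₂tri : ∀ i j : Fin n, j < i → W₂ i j = 0) (hW₂diag : ∀ i, W₂ i i = mu)
    (v : Fin m → Fin n → E)
    (hv : LinearIndependent k (fun p : Fin m × Fin n => v p.1 p.2))
    (u : Fin m → Fin n → E)
    (hu : ∀ p q, u p q =
      ∑ d ∈ f.support, coeff d f •
        ∑ p' : Fin m, ∑ q' : Fin n, ((W₁ ^ (d 0)) p p' * (W₂ ^ (d 1)) q' q) • v p' q') :
    LinearIndependent k (fun p : Fin m × Fin n => u p.1 p.2) := by
  have h1tri : ∀ s (i j : Fin m), j < i → (W₁ ^ s) i j = 0 :=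
    fun s => (pow_tri W₁ lam hW₁tri hW₁diag s).1
  have h1diag : ∀ s (i : Fin m), (W₁ ^ s) i i = lam ^ s :=
    fun s => (pow_tri W₁ lam hW₁tri hW₁diag s).2
  have h2tri : ∀ t (i j : Fin n), j < i → (W₂ ^ t) i j = 0 :=
    fun t => (pow_tri W₂ mu hW₂tri hW₂diag t).1
  have h2diag : ∀ t (i : Fin n), (W₂ ^ t) i i = mu ^ t :=
    fun t => (pow_tri W₂ mu hW₂tri hW₂diag t).2
  rw [Fintype.linearIndependent_iff]
  intro g hg
  -- the coefficient of v j.1 j.2 in ∑ i, g i • u i.1 i.2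
  set C : Fin m × Fin n → k := fun j =>
    ∑ i : Fin m × Fin n, ∑ d ∈ f.support,
      g i * (coeff d f * ((W₁ ^ (d 0)) i.1 j.1 * (W₂ ^ (d 1)) j.2 i.2)) with hCdef
  have hsum : ∑ j : Fin m × Fin n, C j • v j.1 j.2 = 0 := by
    rw [← hg]
    simp only [hCdef, Finset.sum_smul, hu, Finset.smul_sum, smul_smul]
    rw [Finset.sum_comm]
    refine Finset.sum_congr rfl (fun i _ => ?_)
    rw [Finset.sum_comm]
    refine Finset.sum_congr rfl (fun d _ => ?_)
    exact Fintype.sum_prod_type _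
  have hC : ∀ j, C j = 0 := Fintype.linearIndependent_iff.mp hv C hsum
  -- now show g = 0 by induction on the order (p, rev q)
  have key : ∀ N : ℕ, ∀ j : Fin m × Fin n, (j.1 : ℕ) * n + (n - 1 - (j.2 : ℕ)) = N → g j = 0 := by
    intro N
    induction N using Nat.strong_induction_on with
    | _ N ih =>
      intro j hj
      have hCj : ∑ i : Fin m × Fin n, ∑ d ∈ f.support,
          g i * (coeff d f * ((W₁ ^ (d 0)) i.1 j.1 * (W₂ ^ (d 1)) j.2 i.2)) = 0 := hC j
      rw [Finset.sum_eq_single j] at hCj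
      · have : g j * eval ![lam, mu] f = 0 := by
          rw [← hCj, eval_eq', Finset.mul_sum]
          refine Finset.sum_congr rfl (fun d _ => ?_)
          rw [Fin.prod_univ_two, h1diag, h2diag]
          simp only [Matrix.cons_val_zero, Matrix.cons_val_one, Matrix.head_cons]
        exact (mul_eq_zero.mp this).resolve_right hf
      · intro i _ hij
        rcases lt_or_ge j.1 i.1 with h | h
        · apply Finset.sum_eq_zero; intro d _
          rw [h1tri (d 0) i.1 j.1 h]; ring
        · rcases lt_or_ge i.2 j.2 with h' | h'
          · apply Finset.sum_eq_zero; intro d _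
            rw [h2tri (d 1) j.2 i.2 h']; ring
          · -- i.1 ≤ j.1 and j.2 ≤ i.2, i ≠ j : strictly smaller ordinal
            have hord : (i.1 : ℕ) * n + (n - 1 - (i.2 : ℕ)) < N := by
              rw [← hj]
              have hne : (i.1 : ℕ) ≠ (j.1 : ℕ) ∨ (i.2 : ℕ) ≠ (j.2 : ℕ) := by
                by_contra hcon
                push_neg at hcon
                exact hij (Prod.ext (Fin.ext hcon.1) (Fin.ext hcon.2))
              have hi2 : (i.2 : ℕ) < n := i.2.2
              have hj2 : (j.2 : ℕ) < n := j.2.2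
              have h1 : (i.1 : ℕ) ≤ (j.1 : ℕ) := h
              have h2 : (j.2 : ℕ) ≤ (i.2 : ℕ) := h'
              rcases lt_or_eq_of_le h1 with hlt | heq
              · have : (i.1 : ℕ) * n + n ≤ (j.1 : ℕ) * n := by nlinarith
                omega
              · rw [heq]; rcases hne with hne | hne
                · exact absurd heq hne
                · omega
            rw [ih _ hord i rfl]
            simp
      · intro h; exact absurd (Finset.mem_univ j) h
  intro j
  exact key _ j rfl
end

section
/- Let k be an algebraically closed field, let l ∈ k[x,y] be a nonconstant polynomial in two variables, and let φ ∈ k[x] and ψ ∈ k[y] be nonzero polynomials such that l and the polynomial φ(x)·ψ(y) ∈ k[x,y] have no common nonunit factor. Then the set {(λ,μ) ∈ k × k : l(λ,μ) = 0 and φ(λ)·ψ(μ) ≠ 0} is infinite. (Claim, via Bezout's theorem, in the proof of Proposition 3.4.2) -/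
open MvPolynomial

/-!
View `l` as a polynomial `P ∈ k[X][Y]`. A root `a` of `φ` makes `X - a` a nonunit factor of
`φ(X)ψ(Y)`, so it does not divide `P`, and `P` has finitely many zeros on the line `X = a`;
likewise on the lines `Y = b` with `ψ(b) = 0`. Hence only finitely many zeros of `P` lie on
`φ(X)ψ(Y) = 0`, while `P` has infinitely many zeros: either `P = q(X)` and the whole line `X = a`
over a root `a` of `q` consists of zeros, or `P` has positive degree in `Y` and `P(a, Y)` has a
root for each of the infinitely many `a` where its leading coefficient does not vanish.
-/

open Polynomial.Bivariate

namespace Polynomial.Bivariate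

variable {R : Type*} [CommSemiring R]

lemma eval_equivMvPolynomial (x y : R) (p : R[X][Y]) :
    MvPolynomial.eval ![x, y] (equivMvPolynomial R p) = p.evalEval x y := by
  rw [← coe_aevalAeval_eq_evalEval, ← MvPolynomial.coe_aeval_eq_eval]
  change ((MvPolynomial.aeval ![x, y]).comp (equivMvPolynomial R : R[X][Y] →ₐ[R] _)) p = _
  congr 1
  ext <;> simp

lemma equivMvPolynomial_C (φ : R[X]) :
    equivMvPolynomial R (C φ) = aeval (MvPolynomial.X 0) φ := by
  simpa using (aeval_algHom_apply ((equivMvPolynomial R).toAlgHom.comp CAlgHom) X φ).symm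

lemma equivMvPolynomial_map_C (ψ : R[X]) :
    equivMvPolynomial R (ψ.map C) = aeval (MvPolynomial.X 1) ψ := by
  rw [← equivMvPolynomial_X, aeval_algHom_apply]
  rfl

end Polynomial.Bivariate

namespace Polynomial

section CommRing

variable {R : Type*} [CommRing R] {P : R[X][Y]}

lemma map_evalRingHom_eq_zero_iff {x : R} : P.map (evalRingHom x) = 0 ↔ C (X - C x) ∣ P := by
  simp only [C_dvd_iff_dvd_coeff, dvd_iff_isRoot, Polynomial.ext_iff, coeff_map, coeff_zero,
    IsRoot, coe_evalRingHom]

variable [IsDomain R]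

lemma finite_setOf_evalEval_eq_zero_of_not_dvd_left {x : R} (h : ¬C (X - C x) ∣ P) :
    {y | P.evalEval x y = 0}.Finite := by
  simp_rw [← map_evalRingHom_eval]
  exact finite_setOfPred_isRoot (mt map_evalRingHom_eq_zero_iff.1 h)

lemma finite_setOf_evalEval_eq_zero_of_not_dvd_right {y : R} (h : ¬(Y - CC y) ∣ P) :
    {x | P.evalEval x y = 0}.Finite :=
  finite_setOfPred_isRoot (mt dvd_iff_isRoot.2 h)

lemma finite_setOf_evalEval_eq_zero_of_fst_mem {A : Set R} (hA : A.Finite)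
    (h : ∀ x ∈ A, ¬C (X - C x) ∣ P) :
    {p : R × R | P.evalEval p.1 p.2 = 0 ∧ p.1 ∈ A}.Finite := by
  refine (hA.biUnion fun x hx ↦ (Set.finite_singleton x).prod
    (finite_setOf_evalEval_eq_zero_of_not_dvd_left (h x hx))).subset ?_
  rintro ⟨x, y⟩ ⟨hxy, hx⟩
  exact Set.mem_biUnion hx ⟨rfl, hxy⟩

lemma finite_setOf_evalEval_eq_zero_of_snd_mem {B : Set R} (hB : B.Finite)
    (h : ∀ y ∈ B, ¬(Y - CC y) ∣ P) :
    {p : R × R | P.evalEval p.1 p.2 = 0 ∧ p.2 ∈ B}.Finite := by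
  refine (hB.biUnion fun y hy ↦ (finite_setOf_evalEval_eq_zero_of_not_dvd_right (h y hy)).prod
    (Set.finite_singleton y)).subset ?_
  rintro ⟨x, y⟩ ⟨hxy, hy⟩
  exact Set.mem_biUnion hy ⟨hxy, rfl⟩

end CommRing

section IsAlgClosed

variable {k : Type*} [Field k] [IsAlgClosed k] {P : k[X][Y]}

lemma exists_evalEval_eq_zero_of_leadingCoeff_eval_ne_zero (hP : P.natDegree ≠ 0) {x : k}
    (hx : P.leadingCoeff.eval x ≠ 0) : ∃ y, P.evalEval x y = 0 := by
  have hdeg : (P.map (evalRingHom x)).degree = P.degree :=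
    degree_map_eq_of_leadingCoeff_ne_zero _ hx
  obtain ⟨y, hy⟩ := IsAlgClosed.exists_root _ (hdeg ▸ degree_ne_of_natDegree_ne hP)
  exact ⟨y, map_evalRingHom_eval x y P ▸ hy⟩

lemma infinite_setOf_evalEval_eq_zero (hP : ∀ c, P ≠ CC c) :
    {p : k × k | P.evalEval p.1 p.2 = 0}.Infinite := by
  by_cases hdeg : P.natDegree = 0
  · obtain ⟨q, rfl⟩ : ∃ q, P = C q := ⟨_, eq_C_of_natDegree_eq_zero hdeg⟩
    have hq : q.degree ≠ 0 := fun h ↦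
      hP (q.coeff 0) (by rw [eq_C_of_degree_eq_zero h, coeff_C_zero])
    obtain ⟨x, hx⟩ := IsAlgClosed.exists_root q hq
    exact Set.infinite_of_injective_forall_mem (Prod.mk_right_injective x) fun y ↦
      (evalEval_C x y q).trans hx
  · have hc : P.leadingCoeff ≠ 0 :=
      leadingCoeff_ne_zero.2 (by rintro rfl; exact hdeg natDegree_zero)
    refine Set.Infinite.of_image Prod.fst ((finite_setOfPred_isRoot hc).infinite_compl.mono ?_)
    intro x hx
    obtain ⟨y, hy⟩ := exists_evalEval_eq_zero_of_leadingCoeff_eval_ne_zero hdeg hx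
    exact ⟨(x, y), hy, rfl⟩

theorem infinite_setOf_evalEval_eq_zero_and_ne_zero (hP : ∀ c, P ≠ CC c) {φ ψ : k[X]}
    (hφ : φ ≠ 0) (hψ : ψ ≠ 0) (hcop : IsRelPrime P (C φ * ψ.map C)) :
    {p : k × k | P.evalEval p.1 p.2 = 0 ∧ φ.eval p.1 * ψ.eval p.2 ≠ 0}.Infinite := by
  have hφP : ∀ x, φ.IsRoot x → ¬C (X - C x) ∣ P := fun x hx hdvd ↦
    not_isUnit_X_sub_C x <| isUnit_C.1 <| hcop hdvd <|
      dvd_mul_of_dvd_left (_root_.map_dvd C (dvd_iff_isRoot.2 hx)) _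
  have hψP : ∀ y, ψ.IsRoot y → ¬(Y - CC y) ∣ P := fun y hy hdvd ↦
    not_isUnit_X_sub_C (C y) <| hcop hdvd <| dvd_mul_of_dvd_right
      (by simpa using map_dvd C (dvd_iff_isRoot.2 hy)) _
  have hbad : {p : k × k | P.evalEval p.1 p.2 = 0 ∧ φ.eval p.1 * ψ.eval p.2 = 0}.Finite :=
    ((finite_setOf_evalEval_eq_zero_of_fst_mem (finite_setOfPred_isRoot hφ) hφP).union
      (finite_setOf_evalEval_eq_zero_of_snd_mem (finite_setOfPred_isRoot hψ) hψP)).subset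
      fun p ⟨hp, h⟩ ↦ (mul_eq_zero.1 h).imp (⟨hp, ·⟩) (⟨hp, ·⟩)
  refine ((infinite_setOf_evalEval_eq_zero hP).sdiff hbad).mono ?_
  rintro p ⟨hp, hpbad⟩
  exact ⟨hp, fun h ↦ hpbad ⟨hp, h⟩⟩

end IsAlgClosed

end Polynomial

/-- Claim (via Bezout's theorem) in the proof of Proposition 3.4.2: over an algebraically closed
field, if `l(x,y)` is a nonconstant polynomial having no common nonunit factor with
`φ(x)·ψ(y)` (where `φ, ψ` are nonzero one-variable polynomials), then there are infinitely many
points `(λ,μ)` with `l(λ,μ) = 0` and `φ(λ)·ψ(μ) ≠ 0`. -/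
theorem infinite_zero_set_of_coprime (k : Type*) [Field k] [IsAlgClosed k]
    (l : MvPolynomial (Fin 2) k) (hl : ∀ c : k, l ≠ C c)
    (φ ψ : Polynomial k) (hφ : φ ≠ 0) (hψ : ψ ≠ 0)
    (hcop : ∀ d : MvPolynomial (Fin 2) k,
      d ∣ l →
      d ∣ (Polynomial.aeval (X 0 : MvPolynomial (Fin 2) k) φ *
           Polynomial.aeval (X 1 : MvPolynomial (Fin 2) k) ψ) →
      IsUnit d) :
    {p : k × k | eval ![p.1, p.2] l = 0 ∧
      Polynomial.eval p.1 φ * Polynomial.eval p.2 ψ ≠ 0}.Infinite := by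
  obtain ⟨P, rfl⟩ := (equivMvPolynomial k).surjective l
  simp only [eval_equivMvPolynomial]
  refine Polynomial.infinite_setOf_evalEval_eq_zero_and_ne_zero
    (fun c h ↦ hl c (by rw [h, equivMvPolynomial_C_C])) hφ hψ (.of_map (equivMvPolynomial k) ?_)
  rwa [map_mul, equivMvPolynomial_C, equivMvPolynomial_map_C]
end

section
/- Let k be an algebraically closed field and let g, h ∈ k[x,y,z] be nonzero polynomials in three variables having no common nonunit factor. Then for all but finitely many λ ∈ k, the set {(β,γ) ∈ k × k : g(λ,β,γ) = 0 and h(λ,β,γ) = 0} is finite. (Claim in the proof of Lemma 3.3.4) -/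
/-!
View `g` and `h` as polynomials in one variable (`y`, say) over the UFD `k[x, z]`. Being
relatively prime there, by Gauss's lemma they are coprime over its fraction field, and clearing
denominators gives a nonzero `c(x, z) ∈ (g, h)`; likewise a nonzero `c'(x, y) ∈ (g, h)`. Every
common zero `(λ, β, γ)` has `c(λ, γ) = 0 = c'(λ, β)`, and for all but finitely many `λ` (those not
killing the leading coefficients) both `c(λ, ·)` and `c'(λ, ·)` are nonzero, so `β` and `γ` range
over finite sets.
-/

namespace Polynomial

open IsLocalization

section GaussLemma

variable {R K : Type*} [CommRing R] [IsDomain R] [Field K] [Algebra R K] [IsFractionRing R K]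

theorem map_primPart_integerNormalization_dvd [NormalizedGCDMonoid R] (p : K[X]) :
    (integerNormalization (nonZeroDivisors R) p).primPart.map (algebraMap R K) ∣ p := by
  obtain ⟨b, hb, hmap⟩ := integerNormalization_spec (nonZeroDivisors R) p
  have hunit : IsUnit (C (algebraMap R K b)) :=
    isUnit_C.mpr (IsFractionRing.to_map_ne_zero_of_mem_nonZeroDivisors hb).isUnit
  rw [← hunit.dvd_mul_left, ← algebraMap_apply, ← Algebra.smul_def, ← hmap]
  exact Polynomial.map_dvd _ (primPart_dvd _)

theorem isCoprime_map_of_isRelPrime [IsGCDMonoid R] {f g : R[X]} (h : IsRelPrime f g) :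
    IsCoprime (f.map (algebraMap R K)) (g.map (algebraMap R K)) := by
  let : NormalizedGCDMonoid R := Nonempty.some inferInstance
  refine IsRelPrime.isCoprime fun d hdf hdg => ?_
  have hd : d ≠ 0 := by
    rintro rfl
    rw [zero_dvd_iff, Polynomial.map_eq_zero_iff (IsFractionRing.injective R K)] at hdf hdg
    exact not_isRelPrime_zero_zero (hdf ▸ hdg ▸ h)
  refine isUnit_or_eq_zero_of_isUnit_integerNormalization_primPart hd (h ?_ ?_) <;>
    exact (isPrimitive_primPart _).dvd_of_fraction_map_dvd_fraction_map
      ((map_primPart_integerNormalization_dvd d).trans ‹_›)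

theorem exists_mul_add_mul_eq_C_of_isRelPrime [IsGCDMonoid R] {f g : R[X]}
    (h : IsRelPrime f g) : ∃ c : R, c ≠ 0 ∧ ∃ a b : R[X], a * f + b * g = C c := by
  let K := FractionRing R
  obtain ⟨a, b, hab⟩ := isCoprime_map_of_isRelPrime (K := K) h
  obtain ⟨s, hs, ha⟩ := integerNormalization_spec (nonZeroDivisors R) a
  obtain ⟨t, ht, hb⟩ := integerNormalization_spec (nonZeroDivisors R) b
  refine ⟨s * t, mul_ne_zero (nonZeroDivisors.ne_zero hs) (nonZeroDivisors.ne_zero ht),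
    C t * integerNormalization (nonZeroDivisors R) a,
    C s * integerNormalization (nonZeroDivisors R) b,
    map_injective (algebraMap R K) (IsFractionRing.injective R K) ?_⟩
  simp only [Polynomial.map_add, Polynomial.map_mul, map_C, ha, hb, Algebra.smul_def,
    algebraMap_apply, map_mul]
  linear_combination (C (algebraMap R K s) * C (algebraMap R K t)) * hab

end GaussLemma

theorem finite_setOf_isRoot_map {R S : Type*} [Semiring R] [CommRing S] [IsDomain S]
    (φ : R →+* S) {p : R[X]} {n : ℕ} (hn : φ (p.coeff n) ≠ 0) :
    {y | (p.map φ).IsRoot y}.Finite :=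
  finite_setOfPred_isRoot fun h => hn (by rw [← coeff_map, h, coeff_zero])

end Polynomial

namespace MvPolynomial

open Polynomial

noncomputable def finSuccEquivAt (R : Type*) [CommSemiring R] {n : ℕ} (i : Fin (n + 1)) :
    MvPolynomial (Fin (n + 1)) R ≃ₐ[R] (MvPolynomial (Fin n) R)[X] :=
  (renameEquiv R (finSuccEquiv' i)).trans (optionEquivLeft R (Fin n))

theorem eval_insertNth {R : Type*} [CommSemiring R] {n : ℕ} (i : Fin (n + 1)) (y : R)
    (s : Fin n → R) (p : MvPolynomial (Fin (n + 1)) R) :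
    eval (i.insertNth y s) p = ((finSuccEquivAt R i p).map (eval s)).eval y := by
  rw [finSuccEquivAt, AlgEquiv.trans_apply, renameEquiv_apply, ← optionEquivLeft_elim_eval,
    eval_rename]
  congr 2
  funext j
  rcases i.eq_self_or_eq_succAbove j with rfl | ⟨j, rfl⟩ <;> simp

variable {k : Type*} [CommRing k] [IsDomain k] {n : ℕ}

theorem exists_ne_zero_forall_eval_eq_zero_of_isRelPrime [UniqueFactorizationMonoid k]
    (i : Fin (n + 1)) {f g : MvPolynomial (Fin (n + 1)) k} (h : IsRelPrime f g) :
    ∃ c : MvPolynomial (Fin n) k, c ≠ 0 ∧ ∀ y s,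
      eval (i.insertNth y s) f = 0 → eval (i.insertNth y s) g = 0 → eval s c = 0 := by
  have hE : IsRelPrime (finSuccEquivAt k i f) (finSuccEquivAt k i g) :=
    IsRelPrime.of_map (finSuccEquivAt k i).symm (by simpa only [AlgEquiv.symm_apply_apply] using h)
  obtain ⟨c, hc, a, b, hab⟩ := exists_mul_add_mul_eq_C_of_isRelPrime hE
  refine ⟨c, hc, fun y s hf hg => ?_⟩
  rw [eval_insertNth] at hf hg
  simpa [hf, hg] using (congr_arg (fun p => (p.map (eval s)).eval y) hab).symm

theorem exists_ne_zero_forall_finite_fiber (i : Fin (n + 1))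
    {c : MvPolynomial (Fin (n + 1)) k} (hc : c ≠ 0) :
    ∃ d : MvPolynomial (Fin n) k, d ≠ 0 ∧
      ∀ s, eval s d ≠ 0 → {y | eval (i.insertNth y s) c = 0}.Finite := by
  have hE : finSuccEquivAt k i c ≠ 0 := (map_ne_zero_iff _ (AlgEquiv.injective _)).mpr hc
  refine ⟨_, leadingCoeff_ne_zero.mpr hE, fun s hs => ?_⟩
  simpa only [eval_insertNth, IsRoot.def] using finite_setOf_isRoot_map (eval s) hs

theorem finite_setOf_eval_const_eq_zero {σ : Type*} [Unique σ] {d : MvPolynomial σ k}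
    (hd : d ≠ 0) : {a : k | eval (fun _ => a) d = 0}.Finite := by
  have hd' : uniqueAlgEquiv k σ d ≠ 0 := (map_ne_zero_iff _ (AlgEquiv.injective _)).mpr hd
  simpa only [IsRoot.def, Polynomial.eval, eval, coe_eval₂Hom, ← eval₂_const_uniqueAlgEquiv] using
    finite_setOfPred_isRoot hd'

theorem finite_setOf_not_finite_fiber {c : MvPolynomial (Fin 2) k} (hc : c ≠ 0) :
    {a : k | ¬{t | eval ![a, t] c = 0}.Finite}.Finite := by
  obtain ⟨d, hd, hfin⟩ := exists_ne_zero_forall_finite_fiber 1 hc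
  refine (finite_setOf_eval_const_eq_zero hd).subset fun a ha => ?_
  by_contra hda
  have hv (t : k) : ![a, t] = Fin.insertNth 1 t (fun _ => a) := by
    ext j; fin_cases j <;> rfl
  exact ha (by simpa only [hv] using hfin _ hda)

end MvPolynomial

open MvPolynomial

theorem common_zero_set_finite_of_coprime_general (k : Type*) [Field k]
    (g h : MvPolynomial (Fin 3) k)
    (hcop : ∀ d : MvPolynomial (Fin 3) k, d ∣ g → d ∣ h → IsUnit d) :
    {a : k | ¬ {p : k × k |
        eval ![a, p.1, p.2] g = 0 ∧ eval ![a, p.1, p.2] h = 0}.Finite}.Finite := by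
  obtain ⟨cxy, hcxy, hy⟩ := exists_ne_zero_forall_eval_eq_zero_of_isRelPrime 2 hcop
  obtain ⟨cxz, hcxz, hz⟩ := exists_ne_zero_forall_eval_eq_zero_of_isRelPrime 1 hcop
  refine ((finite_setOf_not_finite_fiber hcxy).union
    (finite_setOf_not_finite_fiber hcxz)).subset fun a ha => ?_
  by_contra hfin
  simp only [Set.mem_union, Set.mem_ofPred_eq, not_or, not_not] at hfin
  refine ha ((hfin.1.prod hfin.2).subset ?_)
  rintro ⟨β, γ⟩ ⟨hg, hh⟩
  have hβ : ![a, β, γ] = Fin.insertNth 2 γ ![a, β] := by ext j; fin_cases j <;> rfl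
  have hγ : ![a, β, γ] = Fin.insertNth 1 β ![a, γ] := by ext j; fin_cases j <;> rfl
  exact ⟨hy _ _ (hβ ▸ hg) (hβ ▸ hh), hz _ _ (hγ ▸ hg) (hγ ▸ hh)⟩

/-- Claim in the proof of Lemma 3.3.4: if `g, h` are nonzero polynomials in three variables over
an algebraically closed field having no common nonunit factor, then for all but finitely many
`λ ∈ k` the set `{(β,γ) : g(λ,β,γ) = 0 = h(λ,β,γ)}` is finite. -/
theorem common_zero_set_finite_of_coprime (k : Type*) [Field k] [IsAlgClosed k]
    (g h : MvPolynomial (Fin 3) k) (hg : g ≠ 0) (hh : h ≠ 0)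
    (hcop : ∀ d : MvPolynomial (Fin 3) k, d ∣ g → d ∣ h → IsUnit d) :
    {a : k | ¬ {p : k × k |
        eval ![a, p.1, p.2] g = 0 ∧ eval ![a, p.1, p.2] h = 0}.Finite}.Finite :=
  common_zero_set_finite_of_coprime_general k g h hcop
end

section
/- Let k be an algebraically closed field, let f ∈ k[x,y,z] and let ψ ∈ k[x,y] be a nonzero polynomial. Then the following are equivalent: (a) the image of f is a unit in the localization of k[x,y,z] at the multiplicative set of powers of ψ(x,y)·ψ(x,z) (equivalently, f divides (ψ(x,y)·ψ(x,z))^N in k[x,y,z] for some N ≥ 0); (b) for every λ ∈ k such that ψ(λ,y) is a nonzero polynomial in k[y], the image of the specialization f(λ,y,z) is a unit in the localization of k[y,z] at the multiplicative set of powers of ψ(λ,y)·ψ(λ,z). (Lemma 3.3.4, equivalence of (ii) and (iii)) -/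
/-! By the Nullstellensatz, `F` divides a power of `G` exactly when `G` vanishes on the zero
set of `F`. Both conditions therefore say that `ψ(λ,y)·ψ(λ,z)` vanishes at every zero `(λ,y,z)`
of `f`; the specializations with `ψ(λ,y) = 0` impose nothing, since there `ψ(λ,y)·ψ(λ,z)`
vanishes identically. -/

open MvPolynomial

namespace MvPolynomial

section Substitution

variable {R τ : Type*} [CommSemiring R] (x : τ → R)

theorem eval_aeval {σ : Type*} (g : σ → MvPolynomial τ R) (p : MvPolynomial σ R) :
    eval x (aeval g p) = eval (fun i ↦ eval x (g i)) p := by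
  rw [aeval_eq_bind₁]
  exact eval₂Hom_bind₁ _ _ _ _

theorem eval_aeval_vec₂ (p q : MvPolynomial τ R) (φ : MvPolynomial (Fin 2) R) :
    eval x (aeval ![p, q] φ) = eval ![eval x p, eval x q] φ := by
  rw [eval_aeval]
  congr
  funext i
  fin_cases i <;> rfl

theorem eval_aeval_vec₃ (p q r : MvPolynomial τ R) (φ : MvPolynomial (Fin 3) R) :
    eval x (aeval ![p, q, r] φ) = eval ![eval x p, eval x q, eval x r] φ := by
  rw [eval_aeval]
  congr
  funext i
  fin_cases i <;> rfl

end Substitution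

theorem exists_dvd_pow_iff_forall_eval_eq_zero {k σ : Type*} [Field k] [IsAlgClosed k] [Finite σ]
    (F G : MvPolynomial σ k) :
    (∃ N : ℕ, F ∣ G ^ N) ↔ ∀ x : σ → k, eval x F = 0 → eval x G = 0 := by
  constructor
  · rintro ⟨N, hdvd⟩ x hF
    have hGN := map_dvd (eval x) hdvd
    rw [hF, zero_dvd_iff, map_pow] at hGN
    exact IsNilpotent.eq_zero ⟨N, hGN⟩
  · intro h
    have hG : G ∈ (Ideal.span {F}).radical := by
      rw [← vanishingIdeal_zeroLocus_eq_radical (K := k), mem_vanishingIdeal_iff]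
      exact fun x hx ↦ h x (hx F (Ideal.mem_span_singleton_self F))
    obtain ⟨N, hN⟩ := Ideal.mem_radical_iff.mp hG
    exact ⟨N, Ideal.mem_span_singleton.mp hN⟩

end MvPolynomial

theorem dvd_pow_iff_specializations_dvd_pow_general (k : Type*) [Field k] [IsAlgClosed k]
    (f : MvPolynomial (Fin 3) k) (ψ : MvPolynomial (Fin 2) k) :
    (∃ N : ℕ, f ∣ ((aeval ![X 0, X 1] ψ : MvPolynomial (Fin 3) k) *
        (aeval ![X 0, X 2] ψ : MvPolynomial (Fin 3) k)) ^ N) ↔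
    (∀ a : k, (aeval ![C a, X 0] ψ : MvPolynomial (Fin 2) k) ≠ 0 →
      ∃ N : ℕ, (aeval ![C a, X 0, X 1] f : MvPolynomial (Fin 2) k) ∣
        ((aeval ![C a, X 0] ψ : MvPolynomial (Fin 2) k) *
         (aeval ![C a, X 1] ψ : MvPolynomial (Fin 2) k)) ^ N) := by
  simp only [exists_dvd_pow_iff_forall_eval_eq_zero, map_mul, eval_aeval_vec₂, eval_aeval_vec₃,
    eval_X, eval_C]
  refine ⟨fun H a _ v ↦ H ![a, v 0, v 1], fun H x hx ↦ ?_⟩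
  by_cases hψa : (aeval ![C (x 0), X 0] ψ : MvPolynomial (Fin 2) k) = 0
  · have hψx : eval ![x 0, x 1] ψ = 0 := by
      simpa only [eval_aeval_vec₂, eval_C, eval_X, map_zero, Matrix.cons_val_zero]
        using congrArg (eval ![x 1, x 2]) hψa
    rw [hψx, zero_mul]
  · exact H (x 0) hψa ![x 1, x 2] (by rwa [← FinVec.etaExpand_eq x] at hx)

/-- **Lemma 3.3.4, equivalence of (ii) and (iii).** For `f ∈ k[x,y,z]` and `0 ≠ ψ ∈ k[x,y]`:
`f` becomes a unit in the localization of `k[x,y,z]` at the powers of `ψ(x,y)·ψ(x,z)`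
(equivalently, `f` divides some power of `ψ(x,y)·ψ(x,z)`) if and only if for every `λ ∈ k` with
`ψ(λ,y) ≠ 0`, the specialization `f(λ,y,z)` becomes a unit in the localization of `k[y,z]` at the
powers of `ψ(λ,y)·ψ(λ,z)` (equivalently, divides some power of `ψ(λ,y)·ψ(λ,z)`). -/
theorem dvd_pow_iff_specializations_dvd_pow (k : Type*) [Field k] [IsAlgClosed k]
    (f : MvPolynomial (Fin 3) k) (ψ : MvPolynomial (Fin 2) k) (hψ : ψ ≠ 0) :
    (∃ N : ℕ, f ∣ ((aeval ![X 0, X 1] ψ : MvPolynomial (Fin 3) k) *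
        (aeval ![X 0, X 2] ψ : MvPolynomial (Fin 3) k)) ^ N) ↔
    (∀ a : k, (aeval ![C a, X 0] ψ : MvPolynomial (Fin 2) k) ≠ 0 →
      ∃ N : ℕ, (aeval ![C a, X 0, X 1] f : MvPolynomial (Fin 2) k) ∣
        ((aeval ![C a, X 0] ψ : MvPolynomial (Fin 2) k) *
         (aeval ![C a, X 1] ψ : MvPolynomial (Fin 2) k)) ^ N) :=
  dvd_pow_iff_specializations_dvd_pow_general k f ψ
end

section
/- Let k be a field, λ ∈ k, d ≥ 1, and let e₁,…,e_d be non-negative integers, not all zero. Let J(λ) be the block-diagonal Jordan matrix consisting of e_j copies of the j×j Jordan block J_j(λ) (upper triangular, with λ on the diagonal and 1 on the superdiagonal) for j = 1,…,d. For 1 ≤ j ≤ d put m_j = e_d + e_{d-1} + ⋯ + e_j, and let W(λ) be the square matrix of size m₁ + m₂ + ⋯ + m_d given in d×d block form by: the (j,j) diagonal block is λ·I_{m_j}; the (j,j+1) block is the m_j × m_{j+1} matrix W_{j,j+1} whose top m_{j+1} rows form the identity I_{m_{j+1}} and whose remaining rows are zero; and all other blocks are zero. Then W(λ) is similar to J(λ),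 i.e. there exists an invertible matrix P over k with P⁻¹·J(λ)·P = W(λ). (Claim in Definition 1.3.1: the Weyr matrix of eigenvalue λ is similar to the corresponding Jordan matrix) -/
/-- The `s × s` upper triangular Jordan block with eigenvalue `lam`:
`lam` on the diagonal and `1` on the superdiagonal. -/
def jordanBlock (k : Type*) [Field k] (s : ℕ) (lam : k) : Matrix (Fin s) (Fin s) k :=
  fun i j => if (j : ℕ) = (i : ℕ) then lam else if (j : ℕ) = (i : ℕ) + 1 then 1 else 0

section aux

variable {d : ℕ} (e : Fin d → ℕ)

/-- Number of Jordan blocks of size strictly bigger than `j+1`. -/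
def wS (j : Fin d) : ℕ := ∑ i : Fin d, if j < i then e i else 0

/-- The Weyr multiplicity: number of Jordan blocks of size at least `j+1`. -/
def wM (j : Fin d) : ℕ := ∑ i : Fin d, if j ≤ i then e i else 0

lemma wS_add_le_wM {i j : Fin d} (hij : i ≤ j) : wS e j + e j ≤ wM e i := by
  have h : ∀ x : Fin d,
      (if j < x then e x else 0) + (if x = j then e x else 0) ≤ (if i ≤ x then e x else 0) := by
    intro x
    rcases eq_or_ne x j with rfl | hx
    · simp [hij]
    · by_cases h1 : j < x
      · simp [h1, hx, le_of_lt (lt_of_le_of_lt hij h1)]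
      · simp [h1, hx]
  calc wS e j + e j
      = ∑ x : Fin d, ((if j < x then e x else 0) + (if x = j then e x else 0)) := by
        rw [Finset.sum_add_distrib]
        simp [wS, Finset.sum_ite_eq']
    _ ≤ wM e i := Finset.sum_le_sum fun x _ => h x

lemma wS_add_lt_wM {i j : Fin d} (hij : i ≤ j) {c : ℕ} (hc : c < e j) :
    wS e j + c < wM e i := by
  have := wS_add_le_wM e hij
  omega

lemma wS_add_le_wS {j₁ j₂ : Fin d} (h : j₁ < j₂) : wS e j₂ + e j₂ ≤ wS e j₁ := by
  have h' : ∀ x : Fin d,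
      (if j₂ < x then e x else 0) + (if x = j₂ then e x else 0) ≤ (if j₁ < x then e x else 0) := by
    intro x
    rcases eq_or_ne x j₂ with rfl | hx
    · simp [h]
    · by_cases h1 : j₂ < x
      · simp [h1, hx, lt_trans h h1]
      · simp [h1, hx]
  calc wS e j₂ + e j₂
      = ∑ x : Fin d, ((if j₂ < x then e x else 0) + (if x = j₂ then e x else 0)) := by
        rw [Finset.sum_add_distrib]
        simp [wS, Finset.sum_ite_eq']
    _ ≤ wS e j₁ := Finset.sum_le_sum fun x _ => h' x

lemma wS_inj {j₁ j₂ : Fin d} {c₁ c₂ : ℕ} (h₁ : c₁ < e j₁) (h₂ : c₂ < e j₂)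
    (h : wS e j₁ + c₁ = wS e j₂ + c₂) : j₁ = j₂ ∧ c₁ = c₂ := by
  rcases lt_trichotomy j₁ j₂ with hlt | heq | hlt
  · have := wS_add_le_wS e hlt
    omega
  · subst heq
    omega
  · have := wS_add_le_wS e hlt
    omega

lemma wM_sum : ∑ i : Fin d, wM e i = ∑ j : Fin d, ((j : ℕ) + 1) * e j := by
  unfold wM
  rw [Finset.sum_comm]
  refine Finset.sum_congr rfl fun j _ => ?_
  have : ∀ i : Fin d, (if i ≤ j then e j else 0) = (if i ≤ j then 1 else 0) * e j := by
    intro i; split <;> simp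
  rw [Finset.sum_congr rfl fun i _ => this i, ← Finset.sum_mul]
  congr 1
  rw [Finset.sum_boole]
  push_cast
  have : (Finset.univ.filter fun i : Fin d => i ≤ j) =
      (Finset.range ((j : ℕ) + 1)).attachFin (fun i hi => lt_of_lt_of_le (Finset.mem_range.mp hi) j.2) := by
    ext i
    simp only [Finset.mem_filter, Finset.mem_univ, true_and, Finset.mem_attachFin,
      Finset.mem_range, Fin.le_def, Nat.lt_succ_iff]
  rw [this, Finset.card_attachFin, Finset.card_range]

end aux

/-- Claim in Definition 1.3.1: the Weyr matrix `W(λ)` is similar to the corresponding Jordan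
matrix `J(λ)`.  Here `e j` is the number of Jordan blocks of size `j+1` (for `j : Fin d`), so
`J(λ)` is the block diagonal matrix consisting of `e j` copies of the Jordan block
`J_{j+1}(λ)`, the Weyr multiplicities are `m j = Σ_{i ≥ j} e i`, and `W(λ)` has `λ·I_{m j}` as
`(j,j)`-th diagonal block, the `m j × m (j+1)` matrix whose top rows form the identity (and whose
remaining rows are zero) as `(j,j+1)`-th block, and zero elsewhere. -/
theorem weyr_similar_jordan (k : Type*) [Field k] (lam : k) (d : ℕ) (hd : 1 ≤ d)
    (e : Fin d → ℕ) (he : ∃ j, e j ≠ 0) :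
    let m : Fin d → ℕ := fun j => ∑ i : Fin d, if j ≤ i then e i else 0
    let J : Matrix ((p : (j : Fin d) × Fin (e j)) × Fin ((p.1.1 : ℕ) + 1))
                   ((p : (j : Fin d) × Fin (e j)) × Fin ((p.1.1 : ℕ) + 1)) k :=
      Matrix.blockDiagonal' fun p => jordanBlock k ((p.1.1 : ℕ) + 1) lam
    let W : Matrix ((j : Fin d) × Fin (m j)) ((j : Fin d) × Fin (m j)) k :=
      fun x y =>
        if x.1 = y.1 then (if (x.2 : ℕ) = (y.2 : ℕ) then lam else 0)
        else if (y.1 : ℕ) = (x.1 : ℕ) + 1 then (if (x.2 : ℕ) = (y.2 : ℕ) then 1 else 0) else 0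
    ∃ (σ : ((p : (j : Fin d) × Fin (e j)) × Fin ((p.1.1 : ℕ) + 1)) ≃ ((j : Fin d) × Fin (m j)))
      (P : Matrix ((j : Fin d) × Fin (m j)) ((j : Fin d) × Fin (m j)) k),
      IsUnit P ∧ P⁻¹ * Matrix.reindex σ σ J * P = W := by
  intro m J W
  have hm : m = wM e := rfl
  -- the map sending basis vector `i` of the `c`-th Jordan block of size `j+1`
  -- to position `wS e j + c` in level `i` of the Weyr basis
  set f : ((p : (j : Fin d) × Fin (e j)) × Fin ((p.1.1 : ℕ) + 1)) → ((j : Fin d) × Fin (m j)) :=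
    fun x =>
      ⟨⟨(x.2 : ℕ), lt_of_le_of_lt (Nat.lt_succ_iff.mp x.2.2) x.1.1.2⟩,
       ⟨wS e x.1.1 + (x.1.2 : ℕ), by
          rw [hm]
          exact wS_add_lt_wM e (by exact Nat.lt_succ_iff.mp x.2.2) x.1.2.2⟩⟩ with hf
  have hinj : Function.Injective f := by
    rintro ⟨⟨j₁, c₁⟩, i₁⟩ ⟨⟨j₂, c₂⟩, i₂⟩ h
    have h1 : (i₁ : ℕ) = (i₂ : ℕ) := congrArg (fun z => (z.1 : ℕ)) h
    have h2 : wS e j₁ + (c₁ : ℕ) = wS e j₂ + (c₂ : ℕ) := congrArg (fun z => (z.2 : ℕ)) h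
    obtain ⟨hj, hc⟩ := wS_inj e c₁.2 c₂.2 h2
    subst hj
    have hc' : c₁ = c₂ := Fin.ext hc
    subst hc'
    have : i₁ = i₂ := Fin.ext h1
    subst this
    rfl
  have hcard : Fintype.card ((p : (j : Fin d) × Fin (e j)) × Fin ((p.1.1 : ℕ) + 1)) =
      Fintype.card ((j : Fin d) × Fin (m j)) := by
    rw [hm]
    simp only [Fintype.card_sigma, Fintype.card_fin]
    rw [← Finset.univ_sigma_univ, Finset.sum_sigma, wM_sum]
    exact Finset.sum_congr rfl fun j _ => by simp [mul_comm]
  have hbij : Function.Bijective f :=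
    (Fintype.bijective_iff_injective_and_card f).mpr ⟨hinj, hcard⟩
  set σ : ((p : (j : Fin d) × Fin (e j)) × Fin ((p.1.1 : ℕ) + 1)) ≃ ((j : Fin d) × Fin (m j)) :=
    Equiv.ofBijective f hbij with hσ
  refine ⟨σ, 1, isUnit_one, ?_⟩
  rw [inv_one, one_mul, mul_one]
  have main : ∀ p q, J p q = W (σ p) (σ q) := by
    rintro ⟨⟨j₁, c₁⟩, i₁⟩ ⟨⟨j₂, c₂⟩, i₂⟩
    have hσ1 : ∀ x, σ x = f x := fun x => rfl
    rw [hσ1, hσ1, hf]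
    by_cases hpq : (⟨j₁, c₁⟩ : (j : Fin d) × Fin (e j)) = ⟨j₂, c₂⟩
    · obtain ⟨hj, hc⟩ := Sigma.mk.inj_iff.mp hpq
      subst hj
      have hc' : c₁ = c₂ := eq_of_heq hc
      subst hc'
      simp only [J]
      rw [Matrix.blockDiagonal'_apply_eq]
      simp only [W, jordanBlock, Fin.mk.injEq]
      by_cases h1 : (i₂ : ℕ) = (i₁ : ℕ)
      · simp [h1]
      · simp [h1, Ne.symm h1]
    · simp only [J]
      rw [Matrix.blockDiagonal'_apply_ne _ _ _ hpq]
      have hne : wS e j₁ + (c₁ : ℕ) ≠ wS e j₂ + (c₂ : ℕ) := by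
        intro h
        obtain ⟨hj, hc⟩ := wS_inj e c₁.2 c₂.2 h
        subst hj
        exact hpq (by rw [Fin.ext hc])
      simp only [W]
      split_ifs <;> simp_all
  ext x y
  rw [Matrix.reindex_apply, Matrix.submatrix_apply, main (σ.symm x) (σ.symm y),
    Equiv.apply_symm_apply, Equiv.apply_symm_apply]
end
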